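/- arXiv:1705.08706 — 8 statements merged into one kernel-verified Lean document; each statement's English description precedes it below -/
import Mathlib

section
/- Suppose every pair of distinct points of E lies on exactly one line of L. If a point z does not belong to a line l ∈ L, then the number of points of l is at most the number of lines through z, i.e. s_l ≤ k_z. -/
/-!
Each point of `l` lies on a line through `z`, and a line through `z` is not `l`, so it meets `l`
in at most one point; double counting these incidences gives the bound.
-/

open Finset

theorem subsingleton_sep_mem_of_ne {α : Type*} {E : Finset α} {L : Finset (Finset α)}
    (hpair : ∀ x ∈ E, ∀ y ∈ E, x ≠ y → ∃! l, l ∈ L ∧ x ∈ l ∧ y ∈ l)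
    {l m : Finset α} (hl : l ∈ L) (hlE : l ⊆ E) (hm : m ∈ L) (hlm : l ≠ m) :
    ({x ∈ l | x ∈ m} : Set α).Subsingleton := by
  rintro x ⟨hxl, hxm⟩ y ⟨hyl, hym⟩
  by_contra hxy
  exact hlm ((hpair x (hlE hxl) y (hlE hyl) hxy).unique ⟨hl, hxl, hyl⟩ ⟨hm, hxm, hym⟩)

theorem deBruijnErdos_inequality {α : Type*} [DecidableEq α]
    (E : Finset α) (L : Finset (Finset α)) (hL : ∀ l ∈ L, l ⊆ E)
    (hpair : ∀ x ∈ E, ∀ y ∈ E, x ≠ y → ∃! l, l ∈ L ∧ x ∈ l ∧ y ∈ l) :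
    ∀ z ∈ E, ∀ l ∈ L, z ∉ l →
      l.card ≤ (L.filter (fun l' => z ∈ l')).card := by
  intro z hz l hl hzl
  refine card_le_card_of_forall_subsingleton (· ∈ ·) (fun x hxl => ?_) (fun m hm => ?_)
  · obtain ⟨m, ⟨hmL, hzm, hxm⟩, -⟩ :=
      hpair z hz x (hL l hl hxl) (ne_of_mem_of_not_mem hxl hzl).symm
    exact ⟨m, mem_filter.2 ⟨hmL, hzm⟩, hxm⟩
  · obtain ⟨hmL, hzm⟩ := mem_filter.1 hm
    exact subsingleton_sep_mem_of_ne hpair hl (hL l hl) hmL (by rintro rfl; exact hzl hzm)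
end

section
/- (de Bruijn–Erdős theorem, inequality part) Let E be a set of n ≥ 2 elements and let L be a family of m proper subsets of E such that every pair of distinct elements of E is contained in exactly one member of L. Then m ≥ n. -/
/-!
Write `r x` for the number of lines through a point `x`. If `x ∉ l`, the lines joining `x` to the
points of `l` are pairwise distinct, so `#l ≤ r x`. Now weight the non-incident pairs `(x, l)`:
summing `m / (m - r x)` over them gives `m * n`, and so does summing `n / (n - #l)`. If `m < n`,
then `n * (m - r x) < m * (n - #l)` for every non-incident pair (as `#l ≤ r x` and `0 < r x`),
so the first sum is strictly larger than the second, a contradiction.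
-/

open Finset

namespace Finset

variable {ι κ : Type*} {s : Finset ι}

theorem sum_sum_div_card {t : ι → Finset κ} (c : ℚ) (ht : ∀ a ∈ s, (t a).Nonempty) :
    ∑ a ∈ s, ∑ _b ∈ t a, c / #(t a) = #s * c := by
  rw [← nsmul_eq_mul, ← sum_const]
  refine sum_congr rfl fun a ha => ?_
  rw [sum_const, nsmul_eq_mul, mul_div_cancel₀ _ (by exact_mod_cast (ht a ha).card_pos.ne')]

variable {t : Finset κ} (r : ι → κ → Prop) [∀ a b, Decidable (r a b)]

theorem exists_card_mul_card_bipartiteBelow_le (hs : s.Nonempty)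
    (hst : ∀ a ∈ s, (t.bipartiteAbove r a).Nonempty)
    (hts : ∀ b ∈ t, (s.bipartiteBelow r b).Nonempty) :
    ∃ a ∈ s, ∃ b ∈ t, r a b ∧ #t * #(s.bipartiteBelow r b) ≤ #s * #(t.bipartiteAbove r a) := by
  by_contra! h
  have key : ∑ a ∈ s, ∑ b ∈ t.bipartiteAbove r a, (#s : ℚ) / #(s.bipartiteBelow r b) <
      ∑ a ∈ s, ∑ b ∈ t.bipartiteAbove r a, (#t : ℚ) / #(t.bipartiteAbove r a) := by
    refine sum_lt_sum_of_nonempty hs fun a ha => sum_lt_sum_of_nonempty (hst a ha) fun b hb => ?_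
    obtain ⟨hb, hab⟩ := (mem_bipartiteAbove r).1 hb
    rw [div_lt_div_iff₀ (by exact_mod_cast (hts b hb).card_pos)
      (by exact_mod_cast (hst a ha).card_pos)]
    exact_mod_cast h a ha b hb hab
  rw [sum_sum_bipartiteAbove_eq_sum_sum_bipartiteBelow, sum_sum_div_card _ hts,
    sum_sum_div_card _ hst, mul_comm] at key
  exact lt_irrefl _ key

end Finset

section LinearSpace

variable {α : Type*} {E : Finset α} {L : Finset (Finset α)} {x : α}

theorem exists_line_mem (hpair : ∀ x ∈ E, ∀ y ∈ E, x ≠ y → ∃! l, l ∈ L ∧ x ∈ l ∧ y ∈ l)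
    (hE : 1 < #E) (hx : x ∈ E) : ∃ l ∈ L, x ∈ l := by
  obtain ⟨y, hy, hyx⟩ := exists_mem_ne hE x
  obtain ⟨l, ⟨hl, hxl, -⟩, -⟩ := hpair x hx y hy hyx.symm
  exact ⟨l, hl, hxl⟩

theorem exists_line_notMem (hpair : ∀ x ∈ E, ∀ y ∈ E, x ≠ y → ∃! l, l ∈ L ∧ x ∈ l ∧ y ∈ l)
    (hL : ∀ l ∈ L, l ⊂ E) (hE : 1 < #E) (hx : x ∈ E) : ∃ l ∈ L, x ∉ l := by
  obtain ⟨y, hy, hyx⟩ := exists_mem_ne hE x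
  obtain ⟨l, ⟨hl, -, hyl⟩, hl_unique⟩ := hpair x hx y hy hyx.symm
  obtain ⟨z, hz, hzl⟩ := exists_of_ssubset (hL l hl)
  obtain ⟨l', ⟨hl', hyl', hzl'⟩, -⟩ := hpair y hy z hz (ne_of_mem_of_not_mem hyl hzl)
  refine ⟨l', hl', fun hxl' => hzl ?_⟩
  rwa [← hl_unique l' ⟨hl', hxl', hyl'⟩]

variable [DecidableEq α]

theorem card_le_card_filter_mem_of_notMem
    (hpair : ∀ x ∈ E, ∀ y ∈ E, x ≠ y → ∃! l, l ∈ L ∧ x ∈ l ∧ y ∈ l)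
    {l : Finset α} (hl : l ∈ L) (hlE : l ⊆ E) (hx : x ∈ E) (hxl : x ∉ l) :
    #l ≤ #{l' ∈ L | x ∈ l'} := by
  refine card_le_card_of_forall_subsingleton (· ∈ ·) (fun p hp => ?_)
    fun l' hl' p ⟨hp, hpl'⟩ q ⟨hq, hql'⟩ => ?_
  · obtain ⟨l', ⟨hl', hxl', hpl'⟩, -⟩ := hpair x hx p (hlE hp) (ne_of_mem_of_not_mem hp hxl).symm
    exact ⟨l', mem_filter.2 ⟨hl', hxl'⟩, hpl'⟩
  · by_contra hpq
    obtain ⟨hl'L, hxl'⟩ := mem_filter.1 hl'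
    have : l' = l := (hpair p (hlE hp) q (hlE hq) hpq).unique ⟨hl'L, hpl', hql'⟩ ⟨hl, hp, hq⟩
    exact hxl (this ▸ hxl')

end LinearSpace

theorem deBruijnErdos_count {α : Type*} [DecidableEq α]
    (E : Finset α) (L : Finset (Finset α)) (n m : ℕ)
    (hn : E.card = n) (hm : L.card = m) (hn2 : 2 ≤ n)
    (hL : ∀ l ∈ L, l ⊂ E)
    (hpair : ∀ x ∈ E, ∀ y ∈ E, x ≠ y → ∃! l, l ∈ L ∧ x ∈ l ∧ y ∈ l) :
    n ≤ m := by
  subst hn hm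
  have hsub : ∀ l ∈ L, l ⊆ E := fun l hl => (hL l hl).subset
  obtain ⟨x, hx, l, hl, hxl, hcount⟩ := exists_card_mul_card_bipartiteBelow_le (fun x l => x ∉ l)
    (card_pos.1 (by omega))
    (fun x hx => let ⟨l, hl, hxl⟩ := exists_line_notMem hpair hL (by omega) hx
      ⟨l, mem_bipartiteAbove _ |>.2 ⟨hl, hxl⟩⟩)
    (fun l hl => let ⟨z, hz, hzl⟩ := exists_of_ssubset (hL l hl)
      ⟨z, mem_bipartiteBelow _ |>.2 ⟨hz, hzl⟩⟩)
  have hbelow : #(E.bipartiteBelow (fun x l => x ∉ l) l) = #E - #l := by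
    rw [bipartiteBelow, filter_not, filter_mem_eq_inter, inter_eq_right.2 (hsub l hl),
      card_sdiff_of_subset (hsub l hl)]
  have habove : #(L.bipartiteAbove (fun x l => x ∉ l) x) = #L - #{l' ∈ L | x ∈ l'} := by
    rw [bipartiteAbove, ← card_filter_add_card_filter_not (s := L) (x ∈ ·)]
    omega
  have hk := card_le_card_filter_mem_of_notMem hpair hl (hsub l hl) hx hxl
  obtain ⟨l', hl', hxl'⟩ := exists_line_mem hpair (by omega) hx
  have hr : 0 < #{l' ∈ L | x ∈ l'} := card_pos.2 ⟨l', mem_filter.2 ⟨hl', hxl'⟩⟩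
  have hrm : #{l' ∈ L | x ∈ l'} ≤ #L := card_filter_le _ _
  rw [hbelow, habove] at hcount
  by_contra! hmn
  zify [hrm, hk.trans (hrm.trans hmn.le)] at hcount
  nlinarith
end

section
/- Suppose every pair of distinct points of E lies on exactly one line, every line has at least 2 points, lines are proper subsets of E, |L| = |E| = n, and some point y lies on exactly 2 lines. Then the configuration is a near-pencil: there is a line containing all points except one point z, and every other line consists of z together with exactly one other point. -/
private theorem near_pencil_aux {α : Type*} [DecidableEq α]
    (E : Finset α) (L : Finset (Finset α)) (y : α) (l₁ l₂ : Finset α)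
    (hl₁L : l₁ ∈ L)
    (hyE : y ∈ E) (hy1 : y ∈ l₁) (hy2 : y ∈ l₂)
    (hl₁E : l₁ ⊆ E) (hl₂E : l₂ ⊆ E)
    (hinter : l₁ ∩ l₂ = {y})
    (hEsub : ∀ x ∈ E, x ∈ l₁ ∨ x ∈ l₂)
    (hform : ∀ l ∈ L, l ≠ l₁ → l ≠ l₂ → ∃ u ∈ l₁.erase y, ∃ v ∈ l₂.erase y, l = {u, v})
    (hb : l₂.card = 2) :
    ∃ z ∈ E, ∃ l₀ ∈ L, l₀ = E.erase z ∧
      ∀ l ∈ L, l ≠ l₀ → ∃ x ∈ E.erase z, l = {z, x} := by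
  obtain ⟨u, v, huv, huvl⟩ := Finset.card_eq_two.mp hb
  have hyuv : y = u ∨ y = v := by
    have h := hy2; rw [huvl] at h; simpa using h
  have hz : ∃ z, z ≠ y ∧ l₂ = {y, z} := by
    rcases hyuv with rfl | rfl
    · exact ⟨v, fun h => huv h.symm, huvl⟩
    · refine ⟨u, fun h => huv h, ?_⟩
      rw [huvl]; exact Finset.pair_comm u y
  obtain ⟨z, hzy, hl₂eq⟩ := hz
  have hzl₂ : z ∈ l₂ := by rw [hl₂eq]; simp
  have hzE : z ∈ E := hl₂E hzl₂
  have hz1 : z ∉ l₁ := by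
    intro h
    have hmem : z ∈ l₁ ∩ l₂ := Finset.mem_inter.mpr ⟨h, hzl₂⟩
    rw [hinter] at hmem
    exact hzy (Finset.mem_singleton.mp hmem)
  have hl₁eq : l₁ = E.erase z := by
    apply Finset.Subset.antisymm
    · intro w hw
      exact Finset.mem_erase.mpr ⟨fun h => hz1 (h ▸ hw), hl₁E hw⟩
    · intro w hw
      obtain ⟨hwz, hwE⟩ := Finset.mem_erase.mp hw
      rcases hEsub w hwE with h | h
      · exact h
      · rw [hl₂eq] at h
        rcases Finset.mem_insert.mp h with rfl | h
        · exact hy1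
        · exact absurd (Finset.mem_singleton.mp h) hwz
  refine ⟨z, hzE, l₁, hl₁L, hl₁eq, ?_⟩
  intro l hlL hll₁
  by_cases hll₂ : l = l₂
  · refine ⟨y, Finset.mem_erase.mpr ⟨fun h => hzy h.symm, hyE⟩, ?_⟩
    rw [hll₂, hl₂eq, Finset.pair_comm]
  · obtain ⟨u', hu', v', hv', hleq⟩ := hform l hlL hll₁ hll₂
    obtain ⟨hv'y, hv'l₂⟩ := Finset.mem_erase.mp hv'
    have hv'z : v' = z := by
      rw [hl₂eq] at hv'l₂
      rcases Finset.mem_insert.mp hv'l₂ with h | h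
      · exact absurd h hv'y
      · exact Finset.mem_singleton.mp h
    obtain ⟨hu'y, hu'l₁⟩ := Finset.mem_erase.mp hu'
    refine ⟨u', Finset.mem_erase.mpr ⟨fun h => hz1 (h ▸ hu'l₁), hl₁E hu'l₁⟩, ?_⟩
    rw [hleq, hv'z, Finset.pair_comm]

theorem near_pencil_of_degree_two {α : Type*} [DecidableEq α]
    (E : Finset α) (L : Finset (Finset α)) (n : ℕ)
    (hn : E.card = n) (hm : L.card = n)
    (hL : ∀ l ∈ L, l ⊂ E) (hL2 : ∀ l ∈ L, 2 ≤ l.card)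
    (hpair : ∀ x ∈ E, ∀ y ∈ E, x ≠ y → ∃! l, l ∈ L ∧ x ∈ l ∧ y ∈ l)
    (hy : ∃ y ∈ E, (L.filter (fun l => y ∈ l)).card = 2) :
    ∃ z ∈ E, ∃ l₀ ∈ L, l₀ = E.erase z ∧
      ∀ l ∈ L, l ≠ l₀ → ∃ x ∈ E.erase z, l = {z, x} := by
  obtain ⟨y, hyE, hy2⟩ := hy
  obtain ⟨l₁, l₂, hne, hfil⟩ := Finset.card_eq_two.mp hy2
  have hmem : ∀ l, l ∈ L ∧ y ∈ l ↔ l = l₁ ∨ l = l₂ := by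
    intro l
    constructor
    · intro h
      have hmf : l ∈ L.filter (fun l => y ∈ l) := Finset.mem_filter.mpr h
      rw [hfil] at hmf
      simpa using hmf
    · intro h
      have hmf : l ∈ ({l₁, l₂} : Finset (Finset α)) := by simpa using h
      rw [← hfil] at hmf
      exact Finset.mem_filter.mp hmf
  have hl₁ : l₁ ∈ L ∧ y ∈ l₁ := (hmem l₁).mpr (Or.inl rfl)
  have hl₂ : l₂ ∈ L ∧ y ∈ l₂ := (hmem l₂).mpr (Or.inr rfl)
  have hmeet : ∀ l ∈ L, ∀ l' ∈ L, ∀ u v : α, u ∈ l → u ∈ l' → v ∈ l → v ∈ l' →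
      u ≠ v → l = l' := by
    intro l hl l' hl' u v hul hul' hvl hvl' huv
    have huE : u ∈ E := (hL l hl).subset hul
    have hvE : v ∈ E := (hL l hl).subset hvl
    obtain ⟨m, _, hu⟩ := hpair u huE v hvE huv
    rw [hu l ⟨hl, hul, hvl⟩, hu l' ⟨hl', hul', hvl'⟩]
  have hEsub : ∀ x ∈ E, x ∈ l₁ ∨ x ∈ l₂ := by
    intro x hx
    by_cases hxy : x = y
    · exact Or.inl (hxy ▸ hl₁.2)
    · obtain ⟨m, ⟨hmL, hym, hxm⟩, -⟩ := hpair y hyE x hx (Ne.symm hxy)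
      rcases (hmem m).mp ⟨hmL, hym⟩ with h | h
      · exact Or.inl (h ▸ hxm)
      · exact Or.inr (h ▸ hxm)
  have hinter : l₁ ∩ l₂ = {y} := by
    ext x
    simp only [Finset.mem_inter, Finset.mem_singleton]
    constructor
    · rintro ⟨h1, h2⟩
      by_contra hxy
      exact hne (hmeet l₁ hl₁.1 l₂ hl₂.1 x y h1 h2 hl₁.2 hl₂.2 hxy)
    · rintro rfl; exact ⟨hl₁.2, hl₂.2⟩
  have hynotin : ∀ l ∈ L, l ≠ l₁ → l ≠ l₂ → y ∉ l := by
    intro l hl h1 h2 hyl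
    rcases (hmem l).mp ⟨hl, hyl⟩ with h | h
    · exact h1 h
    · exact h2 h
  have key : ∀ l ∈ L, l ≠ l₁ → l ≠ l₂ → ∀ u, u ∈ l → u ∈ l₁ → ∀ v, v ∈ l → v ∈ l₂ →
      l = {u, v} := by
    intro l hl h1 h2 u hul hu1 v hvl hv2
    apply Finset.Subset.antisymm
    · intro w hw
      simp only [Finset.mem_insert, Finset.mem_singleton]
      rcases hEsub w ((hL l hl).subset hw) with hw1 | hw2
      · left; by_contra hwu
        exact h1 (hmeet l hl l₁ hl₁.1 w u hw hw1 hul hu1 hwu)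
      · right; by_contra hwv
        exact h2 (hmeet l hl l₂ hl₂.1 w v hw hw2 hvl hv2 hwv)
    · intro w hw
      rcases Finset.mem_insert.mp hw with rfl | hw
      · exact hul
      · exact (Finset.mem_singleton.mp hw) ▸ hvl
  have hform : ∀ l ∈ L, l ≠ l₁ → l ≠ l₂ → ∃ u ∈ l₁.erase y, ∃ v ∈ l₂.erase y, l = {u, v} := by
    intro l hl h1 h2
    obtain ⟨u, hul, v, hvl, huv⟩ := Finset.one_lt_card.mp (lt_of_lt_of_le one_lt_two (hL2 l hl))
    have hyn := hynotin l hl h1 h2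
    rcases hEsub u ((hL l hl).subset hul) with hu | hu
    · have hv : v ∈ l₂ := by
        rcases hEsub v ((hL l hl).subset hvl) with h | h
        · exact absurd (hmeet l hl l₁ hl₁.1 u v hul hu hvl h huv) h1
        · exact h
      exact ⟨u, Finset.mem_erase.mpr ⟨fun h => hyn (h ▸ hul), hu⟩,
        v, Finset.mem_erase.mpr ⟨fun h => hyn (h ▸ hvl), hv⟩,
        key l hl h1 h2 u hul hu v hvl hv⟩
    · have hv : v ∈ l₁ := by
        rcases hEsub v ((hL l hl).subset hvl) with h | h
        · exact h
        · exact absurd (hmeet l hl l₂ hl₂.1 u v hul hu hvl h huv) h2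
      exact ⟨v, Finset.mem_erase.mpr ⟨fun h => hyn (h ▸ hvl), hv⟩,
        u, Finset.mem_erase.mpr ⟨fun h => hyn (h ▸ hul), hu⟩,
        key l hl h1 h2 v hvl hv u hul hu⟩
  have hEeq : E = l₁ ∪ l₂ := by
    apply Finset.Subset.antisymm
    · intro x hx
      rcases hEsub x hx with h | h
      · exact Finset.mem_union_left _ h
      · exact Finset.mem_union_right _ h
    · exact Finset.union_subset (hL l₁ hl₁.1).subset (hL l₂ hl₂.1).subset
  have hsum : n + 1 = l₁.card + l₂.card := by
    have h := Finset.card_union_add_card_inter l₁ l₂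
    rw [← hEeq, hinter, hn, Finset.card_singleton] at h
    exact h
  have hline : ∀ u ∈ l₁.erase y, ∀ v ∈ l₂.erase y,
      ({u, v} : Finset α) ∈ L ∧ ({u, v} : Finset α) ≠ l₁ ∧ ({u, v} : Finset α) ≠ l₂ := by
    intro u hu v hv
    obtain ⟨huy, hu1⟩ := Finset.mem_erase.mp hu
    obtain ⟨hvy, hv2⟩ := Finset.mem_erase.mp hv
    have hv1 : v ∉ l₁ := fun h =>
      hvy (Finset.mem_singleton.mp (hinter ▸ Finset.mem_inter.mpr ⟨h, hv2⟩))
    have hu2 : u ∉ l₂ := fun h =>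
      huy (Finset.mem_singleton.mp (hinter ▸ Finset.mem_inter.mpr ⟨hu1, h⟩))
    have huv : u ≠ v := fun h => hu2 (h ▸ hv2)
    obtain ⟨m, ⟨hmL, hum, hvm⟩, -⟩ :=
      hpair u ((hL l₁ hl₁.1).subset hu1) v ((hL l₂ hl₂.1).subset hv2) huv
    have hm1 : m ≠ l₁ := fun h => hv1 (h ▸ hvm)
    have hm2 : m ≠ l₂ := fun h => hu2 (h ▸ hum)
    have hmeq := key m hmL hm1 hm2 u hum hu1 v hvm hv2
    rw [← hmeq]
    exact ⟨hmL, hm1, hm2⟩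
  have hbij : ((l₁.erase y) ×ˢ (l₂.erase y)).card = ((L.erase l₁).erase l₂).card := by
    apply Finset.card_bij (fun p _ => ({p.1, p.2} : Finset α))
    · intro p hp
      obtain ⟨hp1, hp2⟩ := Finset.mem_product.mp hp
      obtain ⟨hmL, hm1, hm2⟩ := hline p.1 hp1 p.2 hp2
      exact Finset.mem_erase.mpr ⟨hm2, Finset.mem_erase.mpr ⟨hm1, hmL⟩⟩
    · intro p hp q hq heq
      obtain ⟨hp1, hp2⟩ := Finset.mem_product.mp hp
      obtain ⟨hq1, hq2⟩ := Finset.mem_product.mp hq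
      obtain ⟨hp1y, hp1l⟩ := Finset.mem_erase.mp hp1
      obtain ⟨hp2y, hp2l⟩ := Finset.mem_erase.mp hp2
      obtain ⟨hq1y, hq1l⟩ := Finset.mem_erase.mp hq1
      obtain ⟨hq2y, hq2l⟩ := Finset.mem_erase.mp hq2
      have h1 : p.1 = q.1 := by
        have hmem1 : p.1 ∈ ({q.1, q.2} : Finset α) := by
          rw [← heq]; exact Finset.mem_insert_self _ _
        rcases Finset.mem_insert.mp hmem1 with h | h
        · exact h
        · exfalso
          have hin : p.1 ∈ l₁ ∩ l₂ :=
            Finset.mem_inter.mpr ⟨hp1l, (Finset.mem_singleton.mp h).symm ▸ hq2l⟩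
          exact hp1y (Finset.mem_singleton.mp (hinter ▸ hin))
      have h2 : p.2 = q.2 := by
        have hmem2 : p.2 ∈ ({q.1, q.2} : Finset α) := by
          rw [← heq]; exact Finset.mem_insert.mpr (Or.inr (Finset.mem_singleton_self _))
        rcases Finset.mem_insert.mp hmem2 with h | h
        · exfalso
          have hin : p.2 ∈ l₁ ∩ l₂ :=
            Finset.mem_inter.mpr ⟨h.symm ▸ hq1l, hp2l⟩
          exact hp2y (Finset.mem_singleton.mp (hinter ▸ hin))
        · exact Finset.mem_singleton.mp h
      exact Prod.ext h1 h2
    · intro l hl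
      obtain ⟨hl2', hrest⟩ := Finset.mem_erase.mp hl
      obtain ⟨hl1', hlL⟩ := Finset.mem_erase.mp hrest
      obtain ⟨u, hu, v, hv, hleq⟩ := hform l hlL hl1' hl2'
      exact ⟨(u, v), Finset.mem_product.mpr ⟨hu, hv⟩, hleq.symm⟩
  have hcard_prod : ((l₁.erase y) ×ˢ (l₂.erase y)).card = (l₁.card - 1) * (l₂.card - 1) := by
    rw [Finset.card_product, Finset.card_erase_of_mem hl₁.2, Finset.card_erase_of_mem hl₂.2]
  have hl₂mem : l₂ ∈ L.erase l₁ := Finset.mem_erase.mpr ⟨Ne.symm hne, hl₂.1⟩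
  have hcard_s : ((L.erase l₁).erase l₂).card = n - 2 := by
    rw [Finset.card_erase_of_mem hl₂mem, Finset.card_erase_of_mem hl₁.1, hm]
    omega
  have hprod : (l₁.card - 1) * (l₂.card - 1) = n - 2 := by
    rw [← hcard_prod, hbij, hcard_s]
  have ha2 := hL2 l₁ hl₁.1
  have hb2 := hL2 l₂ hl₂.1
  have hcase : l₁.card = 2 ∨ l₂.card = 2 := by
    by_contra h
    push_neg at h
    obtain ⟨h1', h2'⟩ := h
    have hp2 : 2 ≤ l₁.card - 1 := by omega
    have hq2 : 2 ≤ l₂.card - 1 := by omega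
    have hm1 : 2 * (l₂.card - 1) ≤ (l₁.card - 1) * (l₂.card - 1) := Nat.mul_le_mul hp2 le_rfl
    have hm2 : (l₁.card - 1) * 2 ≤ (l₁.card - 1) * (l₂.card - 1) := Nat.mul_le_mul le_rfl hq2
    have h3 : (l₁.card - 1) + (l₂.card - 1) ≤ (l₁.card - 1) * (l₂.card - 1) := by linarith
    rw [hprod] at h3
    omega
  rcases hcase with ha | hb
  · exact near_pencil_aux E L y l₂ l₁ hl₂.1 hyE hl₂.2 hl₁.2
      (hL l₂ hl₂.1).subset (hL l₁ hl₁.1).subset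
      (by rw [Finset.inter_comm]; exact hinter)
      (fun x hx => (hEsub x hx).symm)
      (fun l hl h2 h1 => by
        obtain ⟨u, hu, v, hv, hlv⟩ := hform l hl h1 h2
        exact ⟨v, hv, u, hu, by rw [hlv, Finset.pair_comm]⟩)
      ha
  · exact near_pencil_aux E L y l₁ l₂ hl₁.1 hyE hl₁.2 hl₂.2
      (hL l₁ hl₁.1).subset (hL l₂ hl₂.1).subset hinter hEsub hform hb
end

section
/- Let v_1, …, v_n be vectors in a real inner product space such that each (v_i, v_i) ≥ 2 and (v_i, v_j) = 1 for all i ≠ j. Then v_1, …, v_n are linearly independent. -/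
/-!
The Gram matrix of such a family is `diagonal (‖v i‖² - 1) + J` with `J` the all-ones matrix
`vecMulVec 1 1`: a positive diagonal matrix plus a positive semidefinite one. It is therefore
positive definite, and a family with positive definite Gram matrix is linearly independent.
-/

open Matrix
open scoped InnerProductSpace ComplexOrder

section

variable {𝕜 E ι : Type*} [RCLike 𝕜] [NormedAddCommGroup E] [InnerProductSpace 𝕜 E]

theorem Matrix.gram_eq_diagonal_add_vecMulVec_one [DecidableEq ι] {v : ι → E}
    (hoff : Pairwise fun i j ↦ ⟪v i, v j⟫_𝕜 = 1) :
    gram 𝕜 v = diagonal (fun i ↦ ⟪v i, v i⟫_𝕜 - 1) + vecMulVec 1 1 := by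
  ext i j
  rcases eq_or_ne i j with rfl | hij
  · simp [gram_apply]
  · simp [gram_apply, hij, hoff hij]

theorem Matrix.posDef_gram_of_inner_eq_one [Finite ι] {v : ι → E} (hnorm : ∀ i, 1 < ‖v i‖)
    (hoff : Pairwise fun i j ↦ ⟪v i, v j⟫_𝕜 = 1) : (gram 𝕜 v).PosDef := by
  classical
  rw [gram_eq_diagonal_add_vecMulVec_one hoff]
  refine PosDef.add_posSemidef (PosDef.diagonal fun i ↦ ?_) ?_
  · rw [inner_self_eq_norm_sq_to_K, ← RCLike.ofReal_pow, ← RCLike.ofReal_one,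
      ← RCLike.ofReal_sub, RCLike.ofReal_pos, sub_pos]
    exact one_lt_pow₀ (hnorm i) two_ne_zero
  · simpa using posSemidef_vecMulVec_self_star (1 : ι → 𝕜)

theorem linearIndependent_of_inner_eq_one [Finite ι] {v : ι → E} (hnorm : ∀ i, 1 < ‖v i‖)
    (hoff : Pairwise fun i j ↦ ⟪v i, v j⟫_𝕜 = 1) : LinearIndependent 𝕜 v :=
  linearIndependent_of_posDef_gram (posDef_gram_of_inner_eq_one hnorm hoff)

end

theorem linear_independent_of_gram_conditions {V : Type*}
    [NormedAddCommGroup V] [InnerProductSpace ℝ V]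
    (n : ℕ) (v : Fin n → V)
    (hdiag : ∀ i, (2 : ℝ) ≤ inner ℝ (v i) (v i))
    (hoff : ∀ i j, i ≠ j → (inner ℝ (v i) (v j) : ℝ) = 1) :
    LinearIndependent ℝ v := by
  refine linearIndependent_of_inner_eq_one (fun i ↦ ?_) hoff
  have hsq : 1 < ‖v i‖ ^ 2 := by
    rw [← real_inner_self_eq_norm_sq]
    linarith [hdiag i]
  exact (one_lt_sq_iff₀ (norm_nonneg _)).mp hsq
end

section
/- (Hanani's lemma) Suppose every pair of distinct points lies on exactly one line and every line has at least 2 points. Let L be a line of maximal size a = |L|, let b be the maximal size of a line different from L, and assume b ≥ 2. Then for every point x ∈ L, (k_x − 1)(b − 1) ≥ n − a, where n = |E| and k_x is the number of lines through x. -/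
theorem hanani_lemma {α : Type*} [DecidableEq α]
    (E : Finset α) (𝓛 : Finset (Finset α)) (L : Finset α) (a b n : ℕ)
    (hn : E.card = n)
    (h𝓛 : ∀ l ∈ 𝓛, l ⊂ E) (h𝓛2 : ∀ l ∈ 𝓛, 2 ≤ l.card)
    (hpair : ∀ x ∈ E, ∀ y ∈ E, x ≠ y → ∃! l, l ∈ 𝓛 ∧ x ∈ l ∧ y ∈ l)
    (hL : L ∈ 𝓛) (ha : L.card = a) (hmax : ∀ l ∈ 𝓛, l.card ≤ a)
    (hb2 : 2 ≤ b) (hbmax : ∀ K ∈ 𝓛, K ≠ L → K.card ≤ b)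
    (hbatt : ∃ K ∈ 𝓛, K ≠ L ∧ K.card = b) :
    ∀ x ∈ L, n - a ≤ ((𝓛.filter (fun l => x ∈ l)).card - 1) * (b - 1) := by
  intro x hx
  have hLE : L ⊆ E := (h𝓛 L hL).subset
  have hxE : x ∈ E := hLE hx
  set F := 𝓛.filter (fun l => x ∈ l) with hF
  have hLF : L ∈ F := Finset.mem_filter.mpr ⟨hL, hx⟩
  have hsub : E \ L ⊆ (F.erase L).biUnion (fun l => l.erase x) := by
    intro y hy
    obtain ⟨hyE, hyL⟩ := Finset.mem_sdiff.mp hy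
    have hxy : x ≠ y := by rintro rfl; exact hyL hx
    obtain ⟨l, ⟨hl𝓛, hxl, hyl⟩, -⟩ := hpair x hxE y hyE hxy
    refine Finset.mem_biUnion.mpr ⟨l, ?_, ?_⟩
    · refine Finset.mem_erase.mpr ⟨?_, Finset.mem_filter.mpr ⟨hl𝓛, hxl⟩⟩
      rintro rfl; exact hyL hyl
    · exact Finset.mem_erase.mpr ⟨Ne.symm hxy, hyl⟩
  have hcard : (E \ L).card ≤ (F.erase L).card * (b - 1) := by
    calc (E \ L).card ≤ ((F.erase L).biUnion (fun l => l.erase x)).card :=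
          Finset.card_le_card hsub
      _ ≤ ∑ l ∈ F.erase L, (l.erase x).card := Finset.card_biUnion_le
      _ ≤ ∑ l ∈ F.erase L, (b - 1) := by
          apply Finset.sum_le_sum
          intro l hl
          have hlL : l ≠ L := (Finset.mem_erase.mp hl).1
          have hlF := (Finset.mem_erase.mp hl).2
          have hl𝓛 : l ∈ 𝓛 := (Finset.mem_filter.mp hlF).1
          have hxl : x ∈ l := (Finset.mem_filter.mp hlF).2
          have h1 := hbmax l hl𝓛 hlL
          have h2 : (l.erase x).card = l.card - 1 := Finset.card_erase_of_mem hxl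
          omega
      _ = (F.erase L).card * (b - 1) := by
          rw [Finset.sum_const, smul_eq_mul]
  have hEL : (E \ L).card = n - a := by rw [Finset.card_sdiff_of_subset hLE, hn, ha]
  have hFcard : (F.erase L).card = F.card - 1 := Finset.card_erase_of_mem hLF
  rw [hEL, hFcard] at hcard
  exact hcard
end

section
/- Suppose every pair of distinct points lies on exactly one line and every line has at least 2 points and is proper. Let L be a line of maximal size a, and let k be the minimum over all points z of the number k_z of lines through z. Then the number p of lines intersecting L (including L itself) satisfies p ≥ 1 + a(k − 1). -/
theorem lines_meeting_max_line_lower_bound {α : Type*} [DecidableEq α]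
    (E : Finset α) (𝓛 : Finset (Finset α)) (L : Finset α) (a k : ℕ)
    (h𝓛 : ∀ l ∈ 𝓛, l ⊂ E) (h𝓛2 : ∀ l ∈ 𝓛, 2 ≤ l.card)
    (hpair : ∀ x ∈ E, ∀ y ∈ E, x ≠ y → ∃! l, l ∈ 𝓛 ∧ x ∈ l ∧ y ∈ l)
    (hL : L ∈ 𝓛) (ha : L.card = a) (hmax : ∀ l ∈ 𝓛, l.card ≤ a)
    (hkmin : ∀ z ∈ E, k ≤ (𝓛.filter (fun l => z ∈ l)).card)
    (hkatt : ∃ z ∈ E, (𝓛.filter (fun l => z ∈ l)).card = k) :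
    1 + a * (k - 1) ≤ (𝓛.filter (fun l => (l ∩ L).Nonempty)).card := by
  have hLE := (h𝓛 L hL).subset
  set T : α → Finset (Finset α) := fun x => (𝓛.filter (fun l => x ∈ l)).erase L with hT
  have hTcard : ∀ x ∈ L, k - 1 ≤ (T x).card := by
    intro x hx
    have hmem : L ∈ 𝓛.filter (fun l => x ∈ l) := Finset.mem_filter.2 ⟨hL, hx⟩
    rw [hT]
    simp only
    rw [Finset.card_erase_of_mem hmem]
    exact Nat.sub_le_sub_right (hkmin x (hLE hx)) 1
  have hdisj : ∀ x ∈ L, ∀ y ∈ L, x ≠ y → Disjoint (T x) (T y) := by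
    intro x hx y hy hxy
    rw [Finset.disjoint_left]
    intro l hlx hly
    have hl𝓛 := (Finset.mem_filter.1 (Finset.mem_of_mem_erase hlx)).1
    have hlneL := Finset.ne_of_mem_erase hlx
    have hxl := (Finset.mem_filter.1 (Finset.mem_of_mem_erase hlx)).2
    have hyl := (Finset.mem_filter.1 (Finset.mem_of_mem_erase hly)).2
    obtain ⟨m, _, hu⟩ := hpair x (hLE hx) y (hLE hy) hxy
    exact hlneL ((hu l ⟨hl𝓛, hxl, hyl⟩).trans (hu L ⟨hL, hx, hy⟩).symm)
  have hsub : insert L (L.biUnion T) ⊆ 𝓛.filter (fun l => (l ∩ L).Nonempty) := by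
    intro l hl
    rcases Finset.mem_insert.1 hl with hl' | hl
    · refine Finset.mem_filter.2 ⟨hl' ▸ hL, ?_⟩
      rw [hl', Finset.inter_self]
      exact Finset.card_pos.1 (by have := h𝓛2 L hL; omega)
    · obtain ⟨x, hx, hlx⟩ := Finset.mem_biUnion.1 hl
      have hm := Finset.mem_filter.1 (Finset.mem_of_mem_erase hlx)
      exact Finset.mem_filter.2 ⟨hm.1, ⟨x, Finset.mem_inter.2 ⟨hm.2, hx⟩⟩⟩
  have hLnot : L ∉ L.biUnion T := by
    intro h
    obtain ⟨x, hx, hlx⟩ := Finset.mem_biUnion.1 h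
    exact (Finset.ne_of_mem_erase hlx) rfl
  calc 1 + a * (k - 1) ≤ (insert L (L.biUnion T)).card := by
        rw [Finset.card_insert_of_notMem hLnot, Finset.card_biUnion hdisj]
        have h1 : a * (k - 1) = ∑ _x ∈ L, (k - 1) := by
          rw [Finset.sum_const, smul_eq_mul, ha]
        have h2 := Finset.sum_le_sum hTcard
        omega
    _ ≤ _ := Finset.card_le_card hsub
end

section
/- (de Bruijn–Erdős theorem, equality case) Let E be a set of n elements and 𝓛 a family of n proper subsets of E, each of size at least 2, such that every pair of distinct elements of E lies in exactly one member of 𝓛. Then either (i) 𝓛 is a near-pencil: up to relabeling, one line contains n − 1 points and the remaining n − 1 lines each consist of the remaining point together with one point of that line; or (ii) there is an integer k ≥ 3 with n = k(k−1)+1 such that every line has exactly k points and every point lies on exactly k lines (a projective plane). -/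
/-!
With as many lines as points, the double counting behind the de Bruijn–Erdős inequality is
tight, so every point `p` off a line `l` lies on exactly `|l|` lines
(`Configuration.HasLines.lineCount_eq_pointCount`); in particular two lines missing a common
point have the same size. Suppose no line has `n - 1` points. If two lines `l`, `l'` cover `E`,
pick `p ≠ p'` off `l'` and `q ≠ q'` off `l`; the line `m` through `p` and `q` misses `q'` and
`p'`, so `|l| = |m| = |l'|`. Hence all lines have the same size `k`, every point lies on `k`
lines, and the lines through a point partition the other `n - 1` points into `k` blocks of
`k - 1`. If instead some line has `n - 1` points, every other line meets it once and passes
through the remaining point: a near-pencil.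
-/

open Finset

section

variable {α : Type*}

structure IsLinearSpace (E : Finset α) (𝓛 : Finset (Finset α)) : Prop where
  two_le_card : ∀ l ∈ 𝓛, 2 ≤ l.card
  ssubset : ∀ l ∈ 𝓛, l ⊂ E
  existsUnique_line : ∀ x ∈ E, ∀ y ∈ E, x ≠ y → ∃! l, l ∈ 𝓛 ∧ x ∈ l ∧ y ∈ l

def IsNearPencil [DecidableEq α] (E : Finset α) (𝓛 : Finset (Finset α)) : Prop :=
  ∃ z ∈ E, ∃ l₀ ∈ 𝓛, l₀ = E.erase z ∧ ∀ l ∈ 𝓛, l ≠ l₀ → ∃ x ∈ E.erase z, l = {z, x}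

namespace IsLinearSpace

/-- The lines of `𝓛` as a type. It mentions `E` because the point type of a `Membership`
instance is an `outParam`. -/
def Lines (_E : Finset α) (𝓛 : Finset (Finset α)) : Type _ := 𝓛

instance (E : Finset α) (𝓛 : Finset (Finset α)) : Fintype (Lines E 𝓛) :=
  inferInstanceAs (Fintype 𝓛)

instance (E : Finset α) (𝓛 : Finset (Finset α)) : Membership E (Lines E 𝓛) :=
  ⟨fun l p => p.1 ∈ (l : 𝓛).1⟩

variable {E : Finset α} {𝓛 : Finset (Finset α)}

theorem subset (hS : IsLinearSpace E 𝓛) {l : Finset α} (hl : l ∈ 𝓛) : l ⊆ E :=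
  (hS.ssubset l hl).subset

theorem eq_of_mem_of_mem (hS : IsLinearSpace E 𝓛) {l₁ l₂ : Finset α} (hl₁ : l₁ ∈ 𝓛)
    (hl₂ : l₂ ∈ 𝓛) {x y : α} (hxy : x ≠ y) (hx₁ : x ∈ l₁) (hy₁ : y ∈ l₁) (hx₂ : x ∈ l₂)
    (hy₂ : y ∈ l₂) : l₁ = l₂ :=
  (hS.existsUnique_line x (hS.subset hl₁ hx₁) y (hS.subset hl₁ hy₁) hxy).unique
    ⟨hl₁, hx₁, hy₁⟩ ⟨hl₂, hx₂, hy₂⟩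

theorem card_inter_le_one [DecidableEq α] (hS : IsLinearSpace E 𝓛) {l₁ l₂ : Finset α}
    (hl₁ : l₁ ∈ 𝓛) (hl₂ : l₂ ∈ 𝓛) (hne : l₁ ≠ l₂) : (l₁ ∩ l₂).card ≤ 1 :=
  card_le_one.2 fun x hx y hy => by
    by_contra hxy
    rw [mem_inter] at hx hy
    exact hne (hS.eq_of_mem_of_mem hl₁ hl₂ hxy hx.1 hy.1 hx.2 hy.2)

theorem exists_notMem (hS : IsLinearSpace E 𝓛) (hne : 𝓛.Nonempty) (p : α) :
    ∃ l ∈ 𝓛, p ∉ l := by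
  obtain ⟨l₀, hl₀⟩ := hne
  by_cases hpl₀ : p ∉ l₀
  · exact ⟨l₀, hl₀, hpl₀⟩
  obtain ⟨x, hx, hxp⟩ := exists_mem_ne (hS.two_le_card l₀ hl₀) p
  obtain ⟨q, hq, hql₀⟩ := exists_of_ssubset (hS.ssubset l₀ hl₀)
  obtain ⟨m, ⟨hm, hxm, hqm⟩, -⟩ :=
    hS.existsUnique_line x (hS.subset hl₀ hx) q hq (ne_of_mem_of_not_mem hx hql₀)
  refine ⟨m, hm, fun hpm => hql₀ ?_⟩
  rwa [← hS.eq_of_mem_of_mem hm hl₀ hxp hxm hpm hx (not_not.1 hpl₀)]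

theorem sum_card_sub_one_filter_mem [DecidableEq α] (hS : IsLinearSpace E 𝓛) {p : α}
    (hp : p ∈ E) :
    ∑ l ∈ 𝓛.filter (p ∈ ·), (l.card - 1) = E.card - 1 := by
  have hcover : (𝓛.filter (p ∈ ·)).biUnion (·.erase p) = E.erase p := by
    ext q
    simp only [mem_biUnion, mem_filter, mem_erase]
    constructor
    · rintro ⟨l, ⟨hl, -⟩, hqp, hql⟩
      exact ⟨hqp, hS.subset hl hql⟩
    · rintro ⟨hqp, hq⟩
      obtain ⟨l, ⟨hl, hpl, hql⟩, -⟩ := hS.existsUnique_line p hp q hq (Ne.symm hqp)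
      exact ⟨l, ⟨hl, hpl⟩, hqp, hql⟩
  have hdisj : (𝓛.filter (p ∈ ·) : Set (Finset α)).PairwiseDisjoint (·.erase p) := by
    intro l₁ hl₁ l₂ hl₂ hne
    simp only [coe_filter, Set.mem_ofPred_eq] at hl₁ hl₂
    refine disjoint_left.2 fun q hq₁ hq₂ => hne ?_
    rw [mem_erase] at hq₁ hq₂
    exact hS.eq_of_mem_of_mem hl₁.1 hl₂.1 hq₁.1.symm hl₁.2 hq₁.2 hl₂.2 hq₂.2
  rw [← card_erase_of_mem hp, ← hcover, card_biUnion hdisj]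
  exact sum_congr rfl fun l hl => (card_erase_of_mem (mem_filter.1 hl).2).symm

theorem isNearPencil [DecidableEq α] (hS : IsLinearSpace E 𝓛) {l₀ : Finset α}
    (hl₀ : l₀ ∈ 𝓛) (hcard : l₀.card + 1 = E.card) : IsNearPencil E 𝓛 := by
  obtain ⟨z, hz⟩ : ∃ z, E \ l₀ = {z} := card_eq_one.1 (by
    rw [card_sdiff_of_subset (hS.subset hl₀)]; omega)
  have hzE : z ∈ E := (mem_sdiff.1 (hz ▸ mem_singleton_self z)).1
  have hl₀eq : l₀ = E.erase z := by
    rw [← sdiff_singleton_eq_erase, ← hz, Finset.sdiff_sdiff_eq_self (hS.subset hl₀)]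
  refine ⟨z, hzE, l₀, hl₀, hl₀eq, fun l hl hne => ?_⟩
  have hsub : l.erase z ⊆ l ∩ l₀ := fun x hx => by
    rw [mem_erase] at hx
    rw [mem_inter, hl₀eq, mem_erase]
    exact ⟨hx.2, hx.1, hS.subset hl hx.2⟩
  have hle := (card_le_card hsub).trans (hS.card_inter_le_one hl hl₀ hne)
  have hzl : z ∈ l := by
    by_contra hzl
    have := hS.two_le_card l hl
    rw [erase_eq_of_notMem hzl] at hle
    omega
  obtain ⟨x, hx⟩ : ∃ x, l.erase z = {x} := card_eq_one.1 (by
    have := hS.two_le_card l hl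
    rw [card_erase_of_mem hzl] at hle ⊢; omega)
  refine ⟨x, ?_, ?_⟩
  · rw [← hl₀eq]
    exact (mem_inter.1 (hsub (hx ▸ mem_singleton_self x))).2
  · rw [← hx, insert_erase hzl]

open Configuration

noncomputable abbrev hasLines (hS : IsLinearSpace E 𝓛) (hne : 𝓛.Nonempty) :
    HasLines E (Lines E 𝓛) where
  exists_point l := by
    obtain ⟨p, hp, hpl⟩ := exists_of_ssubset (hS.ssubset _ (l : 𝓛).2)
    exact ⟨⟨p, hp⟩, hpl⟩
  exists_line p := by
    obtain ⟨l, hl, hpl⟩ := hS.exists_notMem hne p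
    exact ⟨(⟨l, hl⟩ : 𝓛), hpl⟩
  eq_or_eq {_ _ l₁ l₂} h₁₁ h₂₁ h₁₂ h₂₂ := or_iff_not_imp_left.2 fun h => Subtype.ext <|
    hS.eq_of_mem_of_mem (l₁ : 𝓛).2 (l₂ : 𝓛).2 (Subtype.coe_ne_coe.2 h) h₁₁ h₂₁ h₁₂ h₂₂
  mkLine {p₁ p₂} h := (⟨_, (hS.existsUnique_line p₁ p₁.2 p₂ p₂.2
    (Subtype.coe_ne_coe.2 h)).exists.choose_spec.1⟩ : 𝓛)
  mkLine_ax {p₁ p₂} h := (hS.existsUnique_line p₁ p₁.2 p₂ p₂.2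
    (Subtype.coe_ne_coe.2 h)).exists.choose_spec.2

theorem lineCount_eq [DecidableEq α] (p : E) :
    lineCount (Lines E 𝓛) p = (𝓛.filter (p.1 ∈ ·)).card := by
  rw [lineCount, ← Nat.card_eq_finsetCard]
  exact Nat.card_congr ((Equiv.subtypeSubtypeEquivSubtypeInter (· ∈ 𝓛) (p.1 ∈ ·)).trans
    (Equiv.subtypeEquivRight fun _ => by simp))

theorem pointCount_eq (hS : IsLinearSpace E 𝓛) (l : Lines E 𝓛) :
    pointCount E l = (l : 𝓛).1.card := by
  rw [pointCount, ← Nat.card_eq_finsetCard]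
  exact Nat.card_congr (Equiv.subtypeSubtypeEquivSubtype fun h => hS.subset (l : 𝓛).2 h)

theorem card_filter_mem_eq_card [DecidableEq α] (hS : IsLinearSpace E 𝓛)
    (hcard : E.card = 𝓛.card) {p : α} (hp : p ∈ E) {l : Finset α} (hl : l ∈ 𝓛)
    (hpl : p ∉ l) : (𝓛.filter (p ∈ ·)).card = l.card := by
  let := hS.hasLines ⟨l, hl⟩
  have := HasLines.lineCount_eq_pointCount (P := E) (L := Lines E 𝓛)
    ((Fintype.card_coe E).trans (hcard.trans (Fintype.card_coe 𝓛).symm))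
    (p := ⟨p, hp⟩) (l := show Lines E 𝓛 from ⟨l, hl⟩) hpl
  rwa [lineCount_eq, hS.pointCount_eq] at this

theorem card_eq_card_of_card_add_two_le [DecidableEq α] (hS : IsLinearSpace E 𝓛)
    (hcard : E.card = 𝓛.card) {l l' : Finset α} (hl : l ∈ 𝓛) (hl' : l' ∈ 𝓛)
    (h : l.card + 2 ≤ E.card) (h' : l'.card + 2 ≤ E.card) : l.card = l'.card := by
  by_cases hcover : E ⊆ l ∪ l'
  swap
  · obtain ⟨x, hx, hxll'⟩ := not_subset.1 hcover
    rw [mem_union, not_or] at hxll'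
    rw [← hS.card_filter_mem_eq_card hcard hx hl hxll'.1,
      hS.card_filter_mem_eq_card hcard hx hl' hxll'.2]
  obtain ⟨p, hp, p', hp', hpp'⟩ := one_lt_card.1 (show 1 < (E \ l').card by
    rw [card_sdiff_of_subset (hS.subset hl')]; omega)
  obtain ⟨q, hq, q', hq', hqq'⟩ := one_lt_card.1 (show 1 < (E \ l).card by
    rw [card_sdiff_of_subset (hS.subset hl)]; omega)
  rw [mem_sdiff] at hp hp' hq hq'
  have hpl := (mem_union.1 (hcover hp.1)).resolve_right hp.2
  have hp'l := (mem_union.1 (hcover hp'.1)).resolve_right hp'.2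
  have hql' := (mem_union.1 (hcover hq.1)).resolve_left hq.2
  have hq'l' := (mem_union.1 (hcover hq'.1)).resolve_left hq'.2
  obtain ⟨m, ⟨hm, hpm, hqm⟩, -⟩ := hS.existsUnique_line p hp.1 q hq.1
    (ne_of_mem_of_not_mem hql' hp.2).symm
  have hq'm : q' ∉ m := fun hq'm => hp.2 <|
    hS.eq_of_mem_of_mem hm hl' hqq' hqm hq'm hql' hq'l' ▸ hpm
  have hp'm : p' ∉ m := fun hp'm => hq.2 <|
    hS.eq_of_mem_of_mem hm hl hpp' hpm hp'm hpl hp'l ▸ hqm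
  calc l.card
      _ = (𝓛.filter (q' ∈ ·)).card := (hS.card_filter_mem_eq_card hcard hq'.1 hl hq'.2).symm
      _ = m.card := hS.card_filter_mem_eq_card hcard hq'.1 hm hq'm
      _ = (𝓛.filter (p' ∈ ·)).card := (hS.card_filter_mem_eq_card hcard hp'.1 hm hp'm).symm
      _ = l'.card := hS.card_filter_mem_eq_card hcard hp'.1 hl' hp'.2

end IsLinearSpace

end

theorem deBruijnErdos_equality_case {α : Type*} [DecidableEq α]
    (E : Finset α) (𝓛 : Finset (Finset α)) (n : ℕ)
    (hn : E.card = n) (hm : 𝓛.card = n) (hn3 : 3 ≤ n)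
    (h𝓛 : ∀ l ∈ 𝓛, 2 ≤ l.card ∧ l ⊂ E)
    (hpair : ∀ x ∈ E, ∀ y ∈ E, x ≠ y → ∃! l, l ∈ 𝓛 ∧ x ∈ l ∧ y ∈ l) :
    (∃ z ∈ E, ∃ l₀ ∈ 𝓛, l₀ = E.erase z ∧
        ∀ l ∈ 𝓛, l ≠ l₀ → ∃ x ∈ E.erase z, l = {z, x}) ∨
    (∃ k : ℕ, 3 ≤ k ∧ n = k * (k - 1) + 1 ∧
        (∀ l ∈ 𝓛, l.card = k) ∧
        (∀ z ∈ E, (𝓛.filter (fun l => z ∈ l)).card = k)) := by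
  have hS : IsLinearSpace E 𝓛 := ⟨fun l hl => (h𝓛 l hl).1, fun l hl => (h𝓛 l hl).2, hpair⟩
  have hcard : E.card = 𝓛.card := hn.trans hm.symm
  by_cases hpencil : ∃ l ∈ 𝓛, l.card + 1 = n
  · obtain ⟨l₀, hl₀, hl₀card⟩ := hpencil
    exact Or.inl (hS.isNearPencil hl₀ (hl₀card.trans hn.symm))
  push Not at hpencil
  have hlarge : ∀ l ∈ 𝓛, l.card + 2 ≤ E.card := fun l hl => by
    have := card_lt_card (hS.ssubset l hl)
    have := hpencil l hl
    omega
  obtain ⟨l₀, hl₀⟩ : 𝓛.Nonempty := card_pos.1 (by omega)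
  obtain ⟨k, hk⟩ : ∃ k, l₀.card = k := ⟨_, rfl⟩
  have hlines : ∀ l ∈ 𝓛, l.card = k := fun l hl =>
    hk ▸ hS.card_eq_card_of_card_add_two_le hcard hl hl₀ (hlarge l hl) (hlarge l₀ hl₀)
  have hpoints : ∀ z ∈ E, (𝓛.filter (z ∈ ·)).card = k := fun z hz => by
    obtain ⟨l, hl, hzl⟩ := hS.exists_notMem ⟨l₀, hl₀⟩ z
    rw [hS.card_filter_mem_eq_card hcard hz hl hzl, hlines l hl]
  obtain ⟨z, hz⟩ : E.Nonempty := card_pos.1 (by omega)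
  have hdeg : k * (k - 1) = n - 1 :=
    calc k * (k - 1) = ∑ l ∈ 𝓛.filter (z ∈ ·), (l.card - 1) := by
          rw [sum_congr rfl fun l hl => by rw [hlines l (mem_filter.1 hl).1], sum_const,
            hpoints z hz, smul_eq_mul]
      _ = n - 1 := by rw [hS.sum_card_sub_one_filter_mem hz, hn]
  have hk3 : 3 ≤ k := by
    have := hS.two_le_card l₀ hl₀
    have := hpencil l₀ hl₀
    obtain rfl | hk3 : k = 2 ∨ 3 ≤ k := by omega
    · omega -- `k = 2` forces `n = 3 = |l₀| + 1`
    · exact hk3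
  exact Or.inr ⟨k, hk3, by omega, hlines, hpoints⟩
end

section
/- Suppose every pair of distinct points lies on exactly one line, every line has ≥ 2 points and is proper, and |𝓛| = |E| = n. Then every two distinct lines of 𝓛 intersect. -/
open Finset

theorem lines_intersect_of_card_eq {α : Type*} [DecidableEq α]
    (E : Finset α) (𝓛 : Finset (Finset α)) (n : ℕ)
    (hn : E.card = n) (hm : 𝓛.card = n)
    (h𝓛 : ∀ l ∈ 𝓛, l ⊂ E) (h𝓛2 : ∀ l ∈ 𝓛, 2 ≤ l.card)
    (hpair : ∀ x ∈ E, ∀ y ∈ E, x ≠ y → ∃! l, l ∈ 𝓛 ∧ x ∈ l ∧ y ∈ l) :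
    ∀ l ∈ 𝓛, ∀ l' ∈ 𝓛, l ≠ l' → (l ∩ l').Nonempty := by
  classical
  intro l hl l' hl' hne
  by_contra hcon
  have hdisj : l ∩ l' = ∅ := not_nonempty_iff_eq_empty.mp hcon
  -- r p : number of lines through p
  set r : α → ℕ := fun p => (𝓛.filter (fun L => p ∈ L)).card with hr
  -- Key injection lemma: if p ∉ L then L.card ≤ r p; strengthened with an extra
  -- line through p disjoint from L.
  have key : ∀ p ∈ E, ∀ L ∈ 𝓛, p ∉ L →
      L.card ≤ r p ∧ ∀ l0 ∈ 𝓛, p ∈ l0 → l0 ∩ L = ∅ → L.card + 1 ≤ r p := by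
    intro p hp L hL hpL
    set f : α → Finset α := fun q =>
      if h : q ∈ E ∧ q ≠ p then (hpair q h.1 p hp h.2).choose else ∅ with hf
    have hfspec : ∀ q ∈ L, f q ∈ 𝓛 ∧ q ∈ f q ∧ p ∈ f q := by
      intro q hq
      have hqE : q ∈ E := (h𝓛 L hL).subset hq
      have hqp : q ≠ p := fun h => hpL (h ▸ hq)
      have := (hpair q hqE p hp hqp).choose_spec.1
      simpa only [hf, dif_pos (⟨hqE, hqp⟩ : q ∈ E ∧ q ≠ p)] using this
    have hinj : Set.InjOn f L := by
      intro q1 hq1 q2 hq2 hfe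
      by_contra hne12
      have h1 := hfspec q1 hq1
      have h2 := hfspec q2 hq2
      have huniq := hpair q1 ((h𝓛 L hL).subset hq1) q2 ((h𝓛 L hL).subset hq2) hne12
      have e1 : f q1 = L :=
        huniq.unique ⟨h1.1, h1.2.1, hfe ▸ h2.2.1⟩ ⟨hL, hq1, hq2⟩
      exact hpL (e1 ▸ h1.2.2)
    have himsub : L.image f ⊆ 𝓛.filter (fun L' => p ∈ L') := by
      intro x hx
      obtain ⟨q, hq, rfl⟩ := mem_image.mp hx
      exact mem_filter.mpr ⟨(hfspec q hq).1, (hfspec q hq).2.2⟩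
    have hcardim : (L.image f).card = L.card := card_image_of_injOn hinj
    constructor
    · calc L.card = (L.image f).card := hcardim.symm
        _ ≤ _ := card_le_card himsub
    · intro l0 hl0 hpl0 hl0L
      have hl0notim : l0 ∉ L.image f := by
        intro hmem
        obtain ⟨q, hq, hfq⟩ := mem_image.mp hmem
        have : q ∈ l0 ∩ L := mem_inter.mpr ⟨hfq ▸ (hfspec q hq).2.1, hq⟩
        simp [hl0L] at this
      have hsub2 : insert l0 (L.image f) ⊆ 𝓛.filter (fun L' => p ∈ L') := by
        intro x hx
        rcases mem_insert.mp hx with rfl | hx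
        · exact mem_filter.mpr ⟨hl0, hpl0⟩
        · exact himsub hx
      calc L.card + 1 = (insert l0 (L.image f)).card := by
            rw [card_insert_of_notMem hl0notim, hcardim]
        _ ≤ _ := card_le_card hsub2
  -- A p: lines missing p; B L: points off L
  set A : α → Finset (Finset α) := fun p => 𝓛.filter (fun L => p ∉ L) with hA
  set B : Finset α → Finset α := fun L => E.filter (fun p => p ∉ L) with hB
  have hAcard : ∀ p, r p + (A p).card = n := by
    intro p
    rw [hr, hA]
    have := Finset.card_filter_add_card_filter_not
      (s := 𝓛) (p := fun L => p ∈ L)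
    simpa [hm] using this
  have hBcard : ∀ L ∈ 𝓛, L.card + (B L).card = n := by
    intro L hL
    rw [hB]
    have := Finset.card_filter_add_card_filter_not
      (s := E) (p := fun p => p ∈ L)
    rw [hn] at this
    rw [← this]
    congr 1
    rw [Finset.filter_mem_eq_inter, Finset.inter_eq_right.mpr (h𝓛 L hL).subset]
  have hApos : ∀ p ∈ E, 0 < (A p).card := by
    intro p hp
    apply card_pos.mpr
    by_cases hpl : p ∈ l
    · refine ⟨l', mem_filter.mpr ⟨hl', fun h => ?_⟩⟩
      have : p ∈ l ∩ l' := mem_inter.mpr ⟨hpl, h⟩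
      simp [hdisj] at this
    · exact ⟨l, mem_filter.mpr ⟨hl, hpl⟩⟩
  have hBpos : ∀ L ∈ 𝓛, 0 < (B L).card := by
    intro L hL
    obtain ⟨x, hxE, hxL⟩ := Finset.exists_of_ssubset (h𝓛 L hL)
    exact card_pos.mpr ⟨x, mem_filter.mpr ⟨hxE, hxL⟩⟩
  -- set of non-incident pairs
  set P : Finset (α × Finset α) := (E ×ˢ 𝓛).filter (fun z => z.1 ∉ z.2) with hP
  have h1 : ∀ g : α → Finset α → ℚ,
      ∑ z ∈ P, g z.1 z.2 = ∑ p ∈ E, ∑ L ∈ A p, g p L := by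
    intro g
    rw [hP, sum_filter, Finset.sum_product]
    refine Finset.sum_congr rfl fun p hp => ?_
    rw [hA, sum_filter]
  have h2 : ∀ g : α → Finset α → ℚ,
      ∑ z ∈ P, g z.1 z.2 = ∑ L ∈ 𝓛, ∑ p ∈ B L, g p L := by
    intro g
    rw [hP, sum_filter, Finset.sum_product_right]
    refine Finset.sum_congr rfl fun L hL => ?_
    rw [hB, sum_filter]
  have hS : ∑ z ∈ P, (((A z.1).card : ℚ))⁻¹ = n := by
    rw [h1 (fun p _ => ((A p).card : ℚ)⁻¹)]
    rw [show ∑ p ∈ E, ∑ _L ∈ A p, ((A p).card : ℚ)⁻¹ = ∑ p ∈ E, (1 : ℚ) from ?_]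
    · simp [hn]
    · refine Finset.sum_congr rfl fun p hp => ?_
      rw [Finset.sum_const, nsmul_eq_mul]
      have : ((A p).card : ℚ) ≠ 0 := by
        exact_mod_cast (hApos p hp).ne'
      field_simp
  have hT : ∑ z ∈ P, (((B z.2).card : ℚ))⁻¹ = n := by
    rw [h2 (fun _ L => ((B L).card : ℚ)⁻¹)]
    rw [show ∑ L ∈ 𝓛, ∑ _p ∈ B L, ((B L).card : ℚ)⁻¹ = ∑ L ∈ 𝓛, (1 : ℚ) from ?_]
    · simp [hm]
    · refine Finset.sum_congr rfl fun L hL => ?_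
      rw [Finset.sum_const, nsmul_eq_mul]
      have : ((B L).card : ℚ) ≠ 0 := by
        exact_mod_cast (hBpos L hL).ne'
      field_simp
  have hPmem : ∀ z ∈ P, z.1 ∈ E ∧ z.2 ∈ 𝓛 ∧ z.1 ∉ z.2 := by
    intro z hz
    have := mem_filter.mp hz
    have hz1 := (mem_product.mp this.1).1
    have hz2 := (mem_product.mp this.1).2
    exact ⟨hz1, hz2, this.2⟩
  have hcardle : ∀ z ∈ P, (A z.1).card ≤ (B z.2).card := by
    intro z hz
    obtain ⟨hz1, hz2, hz3⟩ := hPmem z hz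
    have h₁ := (key z.1 hz1 z.2 hz2 hz3).1
    have h₂ := hAcard z.1
    have h₃ := hBcard z.2 hz2
    omega
  have hterm : ∀ z ∈ P, (0:ℚ) ≤ ((A z.1).card : ℚ)⁻¹ - ((B z.2).card : ℚ)⁻¹ := by
    intro z hz
    obtain ⟨hz1, hz2, _⟩ := hPmem z hz
    have hA0 : (0:ℚ) < ((A z.1).card : ℚ) := by exact_mod_cast hApos z.1 hz1
    have hle : ((A z.1).card : ℚ) ≤ ((B z.2).card : ℚ) := by
      exact_mod_cast hcardle z hz
    have := one_div_le_one_div_of_le hA0 hle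
    simpa [one_div] using sub_nonneg.mpr this
  have hsum0 : ∑ z ∈ P, (((A z.1).card : ℚ)⁻¹ - ((B z.2).card : ℚ)⁻¹) = 0 := by
    rw [Finset.sum_sub_distrib, hS, hT, sub_self]
  have heq : ∀ z ∈ P, ((A z.1).card : ℚ)⁻¹ - ((B z.2).card : ℚ)⁻¹ = 0 :=
    (Finset.sum_eq_zero_iff_of_nonneg hterm).mp hsum0
  -- hence r p = L.card for every non-incident pair
  have hreq : ∀ z ∈ P, r z.1 = z.2.card := by
    intro z hz
    obtain ⟨hz1, hz2, _⟩ := hPmem z hz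
    have h0 := heq z hz
    have hA0 : ((A z.1).card : ℚ) ≠ 0 := by exact_mod_cast (hApos z.1 hz1).ne'
    have hB0 : ((B z.2).card : ℚ) ≠ 0 := by exact_mod_cast (hBpos z.2 hz2).ne'
    have : ((A z.1).card : ℚ) = ((B z.2).card : ℚ) :=
      inv_injective (sub_eq_zero.mp h0)
    have hcards : (A z.1).card = (B z.2).card := by exact_mod_cast this
    have h₂ := hAcard z.1
    have h₃ := hBcard z.2 hz2
    omega
  -- final contradiction: take p ∈ l; then p ∉ l', r p = l'.card, but
  -- l'.card + 1 ≤ r p.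
  obtain ⟨p, hpl⟩ := Finset.card_pos.mp (by have := h𝓛2 l hl; omega : 0 < l.card)
  have hpE : p ∈ E := (h𝓛 l hl).subset hpl
  have hpl' : p ∉ l' := by
    intro h
    have : p ∈ l ∩ l' := mem_inter.mpr ⟨hpl, h⟩
    simp [hdisj] at this
  have hzP : (p, l') ∈ P := mem_filter.mpr ⟨mem_product.mpr ⟨hpE, hl'⟩, hpl'⟩
  have e1 : r p = l'.card := hreq (p, l') hzP
  have e2 : l'.card + 1 ≤ r p :=
    (key p hpE l' hl' hpl').2 l hl hpl hdisj
  omega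
end
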